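/- arXiv:1402.5680 — 2 statements merged into one kernel-verified Lean document; each statement's English description precedes it below -/
import Mathlib

section
/- (Lehmer's congruence) For every prime p > 5, the harmonic number H_{⌊p/6⌋} computed in the field ℤ/pℤ satisfies 2·H_{⌊p/6⌋} ≡ −4·q_p(2) − 3·q_p(3) (mod p), where q_p(b) = (b^{p−1} − 1)/p is the Fermat quotient of p to base b. -/
/-- The harmonic number `H_⌊p/N⌋` computed in `ZMod p`: the sum of the
inverses of `1, 2, …, ⌊p/N⌋` in the field `ℤ/pℤ`. -/
def harmonicMod (p n : ℕ) : ZMod p :=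
  ∑ j ∈ Finset.Icc 1 n, ((j : ZMod p))⁻¹

/-- The Fermat quotient `q_p(b) = (b^(p-1) - 1) / p`. -/
def fermatQuotient (p : ℕ) (b : ℤ) : ℤ :=
  (b ^ (p - 1) - 1) / p

open Finset

lemma prod_Icc_id_fact (n : ℕ) : (∏ x ∈ Finset.Icc 1 n, x) = Nat.factorial n := by
  rw [← Finset.Ico_add_one_right_eq_Icc]
  exact Finset.prod_Ico_id_eq_factorial n

lemma prod_expand {R : Type*} [CommRing R] (x : R) (hx : x * x = 0)
    (r s : ℕ → R) (S : Finset ℕ) :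
    ∏ j ∈ S, (r j + x * s j) =
      (∏ j ∈ S, r j) + x * ∑ j ∈ S, s j * ∏ i ∈ S.erase j, r i := by
  classical
  induction S using Finset.induction_on with
  | empty => simp
  | @insert a S ha ih =>
    rw [Finset.prod_insert ha, ih, Finset.prod_insert ha, Finset.sum_insert ha,
      Finset.erase_insert ha]
    have hsum : ∑ j ∈ S, s j * ∏ i ∈ (insert a S).erase j, r i
        = r a * ∑ j ∈ S, s j * ∏ i ∈ S.erase j, r i := by
      rw [Finset.mul_sum]
      refine Finset.sum_congr rfl fun j hj => ?_
      have hja : j ≠ a := fun h => ha (h ▸ hj)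
      rw [Finset.erase_insert_of_ne hja.symm,
        Finset.prod_insert (by simp [ha, Finset.mem_erase])]
      ring
    rw [hsum]
    have h2 : x ^ 2 = 0 := by rwa [sq]
    ring_nf
    rw [h2]
    ring

lemma nat_cast_inj_of_lt {p x y : ℕ} (hx : x < p) (hy : y < p)
    (h : (x : ZMod p) = y) : x = y := by
  rcases Nat.eq_zero_or_pos p with rfl | hp; · omega
  haveI : NeZero p := ⟨hp.ne'⟩
  have := (ZMod.natCast_eq_natCast_iff x y p).mp h
  rwa [Nat.ModEq, Nat.mod_eq_of_lt hx, Nat.mod_eq_of_lt hy] at this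

lemma prod_residues {M : Type*} [CommMonoid M] {p : ℕ} (hp : p.Prime) {b : ℕ}
    (hb : ¬ p ∣ b) (f : ℕ → M) :
    ∏ j ∈ Finset.Icc 1 (p - 1), f (b * j % p) =
      ∏ j ∈ Finset.Icc 1 (p - 1), f j := by
  haveI : Fact p.Prime := ⟨hp⟩
  have hp1 : 1 < p := hp.one_lt
  have hbz : (b : ZMod p) ≠ 0 := by
    simpa [ZMod.natCast_eq_zero_iff] using hb
  set c : ℕ := ((b : ZMod p)⁻¹).val with hc
  have hcz : (c : ZMod p) = (b : ZMod p)⁻¹ := by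
    rw [hc, ZMod.natCast_val, ZMod.cast_id]
  have hmem : ∀ x : ℕ, ¬ p ∣ x → x % p ∈ Finset.Icc 1 (p - 1) := by
    intro x hx
    have h1 : x % p < p := Nat.mod_lt _ (by omega)
    have h2 : x % p ≠ 0 := fun h => hx (Nat.dvd_of_mod_eq_zero h)
    simp only [Finset.mem_Icc]; omega
  have hndvd : ∀ j ∈ Finset.Icc 1 (p - 1), ¬ p ∣ b * j := by
    intro j hj
    simp only [Finset.mem_Icc] at hj
    intro h
    rcases (Nat.Prime.dvd_mul hp).mp h with h' | h'
    · exact hb h'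
    · exact absurd (Nat.le_of_dvd (by omega) h') (by omega)
  have hndvdc : ¬ p ∣ c := by
    intro h
    have h0 : (c : ZMod p) = 0 := by
      simpa [ZMod.natCast_eq_zero_iff] using h
    rw [hcz] at h0
    exact inv_ne_zero hbz h0
  have hcb : (c : ZMod p) * (b : ZMod p) = 1 := by
    rw [hcz]; exact inv_mul_cancel₀ hbz
  have key : ∀ x < p, c * (b * x % p) % p = x := by
    intro x hx
    apply nat_cast_inj_of_lt (Nat.mod_lt _ (by omega)) hx
    push_cast [ZMod.natCast_mod]
    rw [← mul_assoc, hcb, one_mul]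
  have keyb : ∀ x < p, b * (c * x % p) % p = x := by
    intro x hx
    apply nat_cast_inj_of_lt (Nat.mod_lt _ (by omega)) hx
    push_cast [ZMod.natCast_mod]
    rw [← mul_assoc, mul_comm (b:ZMod p) (c:ZMod p), hcb, one_mul]
  refine Finset.prod_nbij' (fun j => b * j % p) (fun j => c * j % p) ?_ ?_ ?_ ?_ ?_
  · intro j hj
    exact hmem _ (hndvd j hj)
  · intro j hj
    refine hmem _ ?_
    intro h
    rcases (Nat.Prime.dvd_mul hp).mp h with h' | h'
    · exact hndvdc h'
    · simp only [Finset.mem_Icc] at hj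
      exact absurd (Nat.le_of_dvd (by omega) h') (by omega)
  · intro j hj
    simp only [Finset.mem_Icc] at hj
    exact key j (by omega)
  · intro j hj
    simp only [Finset.mem_Icc] at hj
    exact keyb j (by omega)
  · intro j hj
    rfl

lemma fermat_quotient_sum {p : ℕ} (hp : p.Prime) {b : ℕ} (hb : ¬ p ∣ b) :
    (b : ZMod p) * ((fermatQuotient p (b : ℤ) : ℤ) : ZMod p) =
      ∑ j ∈ Finset.Icc 1 (p - 1), ((b * j / p : ℕ) : ZMod p) * (j : ZMod p)⁻¹ := by
  haveI : Fact p.Prime := ⟨hp⟩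
  have hp1 : 1 < p := hp.one_lt
  have hbz : (b : ZMod p) ≠ 0 := by
    simpa [ZMod.natCast_eq_zero_iff] using hb
  set q : ℤ := fermatQuotient p (b : ℤ) with hqdef
  have hdvd : (p : ℤ) ∣ (b : ℤ) ^ (p - 1) - 1 := by
    rw [← ZMod.intCast_zmod_eq_zero_iff_dvd]
    push_cast
    rw [ZMod.pow_card_sub_one_eq_one hbz]
    ring
  have hq : (b : ℤ) ^ (p - 1) = 1 + (p : ℤ) * q := by
    have := Int.mul_ediv_cancel' hdvd
    rw [hqdef, fermatQuotient]
    omega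
  set S := Finset.Icc 1 (p - 1) with hS
  set Tn : ℕ := ∑ j ∈ S, (b * j / p) * ∏ i ∈ S.erase j, (b * i % p) with hTn
  have hpp : ((p : ZMod (p^2)) * (p : ZMod (p^2))) = 0 := by
    have : (((p * p : ℕ)) : ZMod (p^2)) = 0 := by
      rw [show p * p = p ^ 2 by ring, ZMod.natCast_self]
    push_cast at this
    exact this
  have hprod : (∏ j ∈ S, ((b : ZMod (p^2)) * (j : ZMod (p^2)))) =
      (∏ j ∈ S, ((b * j % p : ℕ) : ZMod (p^2))) + (p : ZMod (p^2)) * (Tn : ZMod (p^2)) := by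
    have hpe := prod_expand (p : ZMod (p^2)) hpp
      (fun i => ((b * i % p : ℕ) : ZMod (p^2))) (fun j => ((b * j / p : ℕ) : ZMod (p^2))) S
    rw [hTn]
    push_cast
    rw [← hpe]
    refine Finset.prod_congr rfl fun j hj => ?_
    have hmd : (b * j % p) + p * (b * j / p) = b * j := Nat.mod_add_div _ _
    calc (b : ZMod (p^2)) * (j : ZMod (p^2)) = ((b * j : ℕ) : ZMod (p^2)) := by push_cast; ring
    _ = (((b * j % p) + p * (b * j / p) : ℕ) : ZMod (p^2)) := by rw [hmd]
    _ = _ := by push_cast; ring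
  have hBn : (∏ j ∈ S, (b * j % p)) = Nat.factorial (p - 1) := by
    rw [hS, prod_residues hp hb (fun x => x), prod_Icc_id_fact]
  have hAn : (∏ j ∈ S, ((b : ZMod (p^2)) * (j : ZMod (p^2)))) =
      (b : ZMod (p^2)) ^ (p - 1) * ((Nat.factorial (p - 1) : ℕ) : ZMod (p^2)) := by
    rw [Finset.prod_mul_distrib, Finset.prod_const, hS, Nat.card_Icc,
      ← Nat.cast_prod, prod_Icc_id_fact]
    simp
  have hcomb : ((((p : ℤ) * (q * (Nat.factorial (p - 1) : ℕ) - (Tn : ℕ)) : ℤ)) : ZMod (p^2)) = 0 := by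
    have e1 : ((1 + (p:ℤ) * q : ℤ) : ZMod (p^2)) * ((Nat.factorial (p - 1) : ℕ) : ZMod (p^2)) =
        ((Nat.factorial (p - 1) : ℕ) : ZMod (p^2)) + (p : ZMod (p^2)) * (Tn : ZMod (p^2)) := by
      have : (((b:ℤ) ^ (p-1) : ℤ) : ZMod (p^2)) = (b : ZMod (p^2)) ^ (p - 1) := by push_cast; ring
      rw [← hq, this, ← hAn, hprod, ← Nat.cast_prod, hBn]
    push_cast at e1 ⊢
    linear_combination e1
  -- transfer to ZMod p
  have hz : (p : ℤ) ∣ (q * (Nat.factorial (p - 1) : ℕ) - (Tn : ℕ)) := by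
    have h2 : ((p : ℤ)) * (p : ℤ) ∣ (p : ℤ) * (q * (Nat.factorial (p - 1) : ℕ) - (Tn : ℕ)) := by
      have := (ZMod.intCast_zmod_eq_zero_iff_dvd _ (p ^ 2)).mp hcomb
      push_cast at this
      calc (p:ℤ) * p = (p:ℤ)^2 := by ring
      _ ∣ _ := this
    have hp0 : (p : ℤ) ≠ 0 := by exact_mod_cast hp.ne_zero
    exact (mul_dvd_mul_iff_left hp0).mp h2
  have hZp : (q : ZMod p) * ((Nat.factorial (p - 1) : ℕ) : ZMod p) = ((Tn : ℕ) : ZMod p) := by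
    have h3 : ((((q * (Nat.factorial (p - 1) : ℕ) - (Tn : ℕ)) : ℤ)) : ZMod p) = 0 :=
      (ZMod.intCast_zmod_eq_zero_iff_dvd _ p).mpr hz
    push_cast at h3
    linear_combination h3
  -- compute Tn in ZMod p
  have hTp : ((Tn : ℕ) : ZMod p) =
      ∑ j ∈ S, ((b * j / p : ℕ) : ZMod p) *
        (((Nat.factorial (p - 1) : ℕ) : ZMod p) * ((b : ZMod p) * (j : ZMod p))⁻¹) := by
    rw [hTn]
    push_cast
    refine Finset.sum_congr rfl fun j hj => ?_
    congr 1
    have hprodj : ∏ i ∈ S.erase j, ((b * i % p : ℕ) : ZMod p)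
        = ∏ i ∈ S.erase j, ((b : ZMod p) * (i : ZMod p)) := by
      refine Finset.prod_congr rfl fun i _ => ?_
      rw [ZMod.natCast_mod]
      push_cast
      ring
    have hjz : ((b : ZMod p) * (j : ZMod p)) ≠ 0 := by
      rw [hS, Finset.mem_Icc] at hj
      have : (j : ZMod p) ≠ 0 := by
        rw [Ne, ZMod.natCast_eq_zero_iff]
        intro h
        exact absurd (Nat.le_of_dvd (by omega) h) (by omega)
      exact mul_ne_zero hbz this
    have hfull : ∏ i ∈ S, ((b : ZMod p) * (i : ZMod p))
        = ((Nat.factorial (p - 1) : ℕ) : ZMod p) := by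
      rw [Finset.prod_mul_distrib, Finset.prod_const, hS, Nat.card_Icc,
        ← Nat.cast_prod, prod_Icc_id_fact]
      simp [ZMod.pow_card_sub_one_eq_one hbz]
    have h4 : (∏ i ∈ S.erase j, ((b : ZMod p) * (i : ZMod p))) * ((b : ZMod p) * (j : ZMod p))
        = ∏ i ∈ S, ((b : ZMod p) * (i : ZMod p)) :=
      Finset.prod_erase_mul S (fun i => ((b : ZMod p) * (i : ZMod p))) hj
    rw [hprodj, eq_comm, mul_inv_eq_iff_eq_mul₀ hjz, ← hfull]
    exact h4.symm
  rw [hTp] at hZp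
  -- finish
  have hfact : ((Nat.factorial (p - 1) : ℕ) : ZMod p) ≠ 0 := by
    rw [ZMod.wilsons_lemma]
    intro h
    have : (1 : ZMod p) = 0 := by linear_combination -h
    simpa using this
  have hsum : ∑ j ∈ S, ((b * j / p : ℕ) : ZMod p) *
        (((Nat.factorial (p - 1) : ℕ) : ZMod p) * ((b : ZMod p) * (j : ZMod p))⁻¹)
      = ((Nat.factorial (p - 1) : ℕ) : ZMod p) * (b : ZMod p)⁻¹ *
        ∑ j ∈ S, ((b * j / p : ℕ) : ZMod p) * (j : ZMod p)⁻¹ := by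
    rw [Finset.mul_sum]
    refine Finset.sum_congr rfl fun j hj => ?_
    rw [mul_inv]
    ring
  rw [hsum] at hZp
  have hbinv : (b : ZMod p) * (b : ZMod p)⁻¹ = 1 := mul_inv_cancel₀ hbz
  field_simp at hZp ⊢
  linear_combination hZp


lemma Ioc_zero_eq_Icc_one (n : ℕ) : Finset.Ioc 0 n = Finset.Icc 1 n := by
  ext x; simp [Finset.mem_Ioc, Finset.mem_Icc]; omega

lemma inv_sum_reflect {p : ℕ} (hp : p.Prime) {m : ℕ} (hm : m ≤ p - 1) :
    ∑ j ∈ Finset.Ioc m (p - 1), ((j : ZMod p))⁻¹ = - harmonicMod p (p - 1 - m) := by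
  haveI : Fact p.Prime := ⟨hp⟩
  have hp1 : 1 < p := hp.one_lt
  rw [harmonicMod, ← Finset.sum_neg_distrib]
  refine Finset.sum_nbij' (fun j => p - j) (fun j => p - j) ?_ ?_ ?_ ?_ ?_
  · intro j hj; simp only [Finset.mem_Ioc, Finset.mem_Icc] at *; omega
  · intro j hj; simp only [Finset.mem_Ioc, Finset.mem_Icc] at *; omega
  · intro j hj
    simp only [Finset.mem_Ioc] at hj
    show p - (p - j) = j
    omega
  · intro j hj
    simp only [Finset.mem_Icc] at hj
    show p - (p - j) = j
    omega
  · intro j hj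
    simp only [Finset.mem_Ioc] at hj
    have hle : j ≤ p := by omega
    have : ((p - j : ℕ) : ZMod p) = - (j : ZMod p) := by
      push_cast [Nat.cast_sub hle]
      simp
    rw [this, inv_neg, neg_neg]

lemma harmonic_split {p : ℕ} (hp : p.Prime) {m : ℕ} (hm : m ≤ p - 1) :
    harmonicMod p m + ∑ j ∈ Finset.Ioc m (p - 1), ((j : ZMod p))⁻¹
      = harmonicMod p (p - 1) := by
  rw [harmonicMod, harmonicMod, ← Ioc_zero_eq_Icc_one, ← Ioc_zero_eq_Icc_one]
  exact Finset.sum_Ioc_consecutive _ (Nat.zero_le m) hm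

lemma harmonic_last {p : ℕ} (hp : p.Prime) (hodd : p ≠ 2) :
    harmonicMod p (p - 1) = 0 := by
  haveI : Fact p.Prime := ⟨hp⟩
  have h0 := harmonic_split hp (m := 0) (Nat.zero_le _)
  rw [inv_sum_reflect hp (Nat.zero_le _), Nat.sub_zero] at h0
  have hH0 : harmonicMod p 0 = 0 := by simp [harmonicMod]
  rw [hH0] at h0
  have h2 : (2 : ZMod p) ≠ 0 := by
    have h2' : ((2:ℕ) : ZMod p) ≠ 0 := by
      rw [Ne, ZMod.natCast_eq_zero_iff]
      intro h
      have := (Nat.prime_dvd_prime_iff_eq hp Nat.prime_two).mp h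
      exact hodd this
    exact_mod_cast h2'
  have h3 : 2 * harmonicMod p (p - 1) = 0 := by linear_combination -h0
  rcases mul_eq_zero.mp h3 with h | h
  · exact absurd h h2
  · exact h

lemma harmonic_reflect {p : ℕ} (hp : p.Prime) (hodd : p ≠ 2) {m : ℕ} (hm : m ≤ p - 1) :
    harmonicMod p (p - 1 - m) = harmonicMod p m := by
  have h1 := harmonic_split hp hm
  rw [inv_sum_reflect hp hm, harmonic_last hp hodd] at h1
  linear_combination -h1

lemma sum_div_decomp {p b : ℕ} (hp : p.Prime) (hb1 : 1 ≤ b) (hbp : b < p) :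
    ∑ j ∈ Finset.Icc 1 (p - 1), ((b * j / p : ℕ) : ZMod p) * (j : ZMod p)⁻¹
      = ∑ k ∈ Finset.Icc 1 (b - 1), ∑ j ∈ Finset.Ioc (k * p / b) (p - 1), (j : ZMod p)⁻¹ := by
  have hp1 : 1 < p := hp.one_lt
  have hbp' : ¬ p ∣ b := fun h => absurd (Nat.le_of_dvd (by omega) h) (by omega)
  have hfilter : ∀ j ∈ Finset.Icc 1 (p - 1),
      (Finset.Icc 1 (b - 1)).filter (fun k => k * p / b < j) = Finset.Icc 1 (b * j / p) := by
    intro j hj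
    simp only [Finset.mem_Icc] at hj
    have hjp : ¬ p ∣ j := fun h => absurd (Nat.le_of_dvd (by omega) h) (by omega)
    ext k
    simp only [Finset.mem_filter, Finset.mem_Icc]
    constructor
    · rintro ⟨⟨hk1, hk2⟩, hkj⟩
      refine ⟨hk1, ?_⟩
      rw [Nat.le_div_iff_mul_le (by omega : 0 < p)]
      rw [Nat.div_lt_iff_lt_mul (by omega : 0 < b)] at hkj
      calc k * p ≤ j * b := le_of_lt hkj
      _ = b * j := mul_comm _ _
    · rintro ⟨hk1, hk2⟩
      have hkp : k * p ≤ b * j := (Nat.le_div_iff_mul_le (by omega)).mp hk2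
      have hne : k * p ≠ b * j := by
        intro he
        have hd : p ∣ b * j := he ▸ (⟨k, mul_comm k p⟩ : p ∣ k * p)
        rcases (Nat.Prime.dvd_mul hp).mp hd with h | h
        exacts [hbp' h, hjp h]
      have hklt : k ≤ b - 1 := by
        by_contra hgt
        push_neg at hgt
        have h1 : b * p ≤ k * p := Nat.mul_le_mul_right p (by omega)
        have h2 : b * j ≤ b * (p - 1) := Nat.mul_le_mul_left b (by omega)
        have h3 : b * (p - 1) < b * p := Nat.mul_lt_mul_of_pos_left (by omega) (by omega)
        omega
      refine ⟨⟨hk1, hklt⟩, ?_⟩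
      rw [Nat.div_lt_iff_lt_mul (by omega : 0 < b), mul_comm j b]
      exact lt_of_le_of_ne hkp hne
  have step1 : ∀ j ∈ Finset.Icc 1 (p-1), ((b * j / p : ℕ) : ZMod p) * (j : ZMod p)⁻¹
      = ∑ k ∈ Finset.Icc 1 (b-1), (if k * p / b < j then (j : ZMod p)⁻¹ else 0) := by
    intro j hj
    rw [← Finset.sum_filter, hfilter j hj, Finset.sum_const, Nat.card_Icc, nsmul_eq_mul]
    norm_num
  rw [Finset.sum_congr rfl step1, Finset.sum_comm]
  refine Finset.sum_congr rfl fun k hk => ?_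
  rw [← Finset.sum_filter]
  generalize k * p / b = c
  refine Finset.sum_congr ?_ (fun _ _ => rfl)
  ext j
  simp only [Finset.mem_filter, Finset.mem_Icc, Finset.mem_Ioc]
  omega


lemma pow_eq_one_add {p : ℕ} (hp : p.Prime) {b : ℕ} (hb : ¬ p ∣ b) :
    ((b : ℤ)) ^ (p - 1) = 1 + (p : ℤ) * fermatQuotient p (b : ℤ) := by
  haveI : Fact p.Prime := ⟨hp⟩
  have hbz : (b : ZMod p) ≠ 0 := by
    simpa [ZMod.natCast_eq_zero_iff] using hb
  have hdvd : (p : ℤ) ∣ (b : ℤ) ^ (p - 1) - 1 := by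
    rw [← ZMod.intCast_zmod_eq_zero_iff_dvd]
    push_cast
    rw [ZMod.pow_card_sub_one_eq_one hbz]
    ring
  have := Int.mul_ediv_cancel' hdvd
  rw [fermatQuotient]
  omega

theorem lehmer_congruence (p : ℕ) (hp : p.Prime) (h5 : 5 < p) :
    2 * harmonicMod p (p / 6) =
      ((-4 * fermatQuotient p 2 - 3 * fermatQuotient p 3 : ℤ) : ZMod p) := by
  haveI : Fact p.Prime := ⟨hp⟩
  have hp1 : 1 < p := hp.one_lt
  have hodd : p ≠ 2 := by omega
  have hd2 : ¬ (2 ∣ p) := fun h => by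
    have := (Nat.prime_dvd_prime_iff_eq Nat.prime_two hp).mp h; omega
  have hd3 : ¬ (3 ∣ p) := fun h => by
    have := (Nat.prime_dvd_prime_iff_eq Nat.prime_three hp).mp h; omega
  have hm2 : p % 2 = 1 := by omega
  have hm3 : p % 3 ≠ 0 := by omega
  have h2 : ¬ p ∣ 2 := fun h => absurd (Nat.le_of_dvd (by omega) h) (by omega)
  have h3 : ¬ p ∣ 3 := fun h => absurd (Nat.le_of_dvd (by omega) h) (by omega)
  have h6 : ¬ p ∣ 6 := fun h => absurd (Nat.le_of_dvd (by omega) h) (by omega)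
  have sref : ∀ m, m ≤ p - 1 → ∑ j ∈ Finset.Ioc m (p - 1), ((j : ZMod p))⁻¹
      = -(harmonicMod p m) := by
    intro m hm
    rw [inv_sum_reflect hp hm, harmonic_reflect hp hodd hm]
  have k2 := fermat_quotient_sum hp h2
  have k3 := fermat_quotient_sum hp h3
  have k6 := fermat_quotient_sum hp h6
  rw [sum_div_decomp hp (by omega) (by omega)] at k2 k3 k6
  rw [show Finset.Icc 1 (2-1) = ({1} : Finset ℕ) by decide] at k2
  rw [show Finset.Icc 1 (3-1) = ({1,2} : Finset ℕ) by decide] at k3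
  rw [show Finset.Icc 1 (6-1) = ({1,2,3,4,5} : Finset ℕ) by decide] at k6
  simp only [Finset.sum_singleton, Finset.sum_insert, Finset.mem_insert,
    Finset.mem_singleton, one_mul] at k2 k3 k6
  have expand2 : ∀ f : ℕ → ZMod p, ∑ k ∈ ({1,2} : Finset ℕ), f k = f 1 + f 2 :=
    fun f => Finset.sum_pair (by norm_num)
  have expand5 : ∀ f : ℕ → ZMod p, ∑ k ∈ ({1,2,3,4,5} : Finset ℕ), f k
      = f 1 + f 2 + f 3 + f 4 + f 5 := by
    intro f
    rw [Finset.sum_insert (by norm_num), Finset.sum_insert (by norm_num),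
      Finset.sum_insert (by norm_num), Finset.sum_pair (by norm_num)]
    ring
  simp only [expand2] at k3
  simp only [expand5] at k6
  simp only [one_mul] at k3 k6
  rw [sref (p/2) (by omega)] at k2
  rw [sref (p/3) (by omega), sref (2*p/3) (by omega)] at k3
  rw [sref (p/6) (by omega), sref (2*p/6) (by omega), sref (3*p/6) (by omega),
    sref (4*p/6) (by omega), sref (5*p/6) (by omega)] at k6
  rw [show 2*p/6 = p/3 by omega, show 3*p/6 = p/2 by omega,
    show 4*p/6 = 2*p/3 by omega] at k6
  have hA : harmonicMod p (2*p/3) = harmonicMod p (p/3) := by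
    have h := harmonic_reflect hp hodd (m := p/3) (by omega)
    rwa [show p-1-p/3 = 2*p/3 by omega] at h
  have hB : harmonicMod p (5*p/6) = harmonicMod p (p/6) := by
    have h := harmonic_reflect hp hodd (m := p/6) (by omega)
    rwa [show p-1-p/6 = 5*p/6 by omega] at h
  -- q6 = q2 + q3 + p q2 q3 over ℤ
  have e2 := pow_eq_one_add hp h2
  have e3 := pow_eq_one_add hp h3
  have e6 := pow_eq_one_add hp h6
  push_cast at e2 e3 e6
  have hq6 : fermatQuotient p 6 = fermatQuotient p 2 + fermatQuotient p 3
      + p * (fermatQuotient p 2 * fermatQuotient p 3) := by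
    have hpne : (p:ℤ) ≠ 0 := by exact_mod_cast hp.ne_zero
    apply mul_left_cancel₀ hpne
    have h66 : ((6:ℤ))^(p-1) = ((2:ℤ))^(p-1) * ((3:ℤ))^(p-1) := by
      rw [show (6:ℤ) = 2*3 by norm_num, mul_pow]
    rw [e2, e3, e6] at h66
    linear_combination h66
  have hq6' : ((fermatQuotient p 6 : ℤ) : ZMod p) =
      ((fermatQuotient p 2 : ℤ) : ZMod p) + ((fermatQuotient p 3 : ℤ) : ZMod p) := by
    rw [hq6]
    push_cast
    rw [ZMod.natCast_self]
    ring
  push_cast at k2 k3 k6 ⊢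
  linear_combination k6 - k2 - k3 - 6*hq6' - hB
end

section
/- For every prime p > 5, the harmonic number H_{⌊p/6⌋} computed in the field ℤ/pℤ is congruent to 0 modulo p if and only if 4·q_p(2) + 3·q_p(3) ≡ 0 (mod p), where q_p(b) = (b^{p−1} − 1)/p is the Fermat quotient of p to base b. -/
/-!
Summing `q_p(aj) ≡ q_p(a) + q_p(j)` and `q_p(r + pt) ≡ q_p(r) - t / r (mod p)` over `0 < j < p`,
with `aj = r + pt` and `r = aj mod p` running through `1, …, p - 1`, gives Lerch's formula
`a q_p(a) ≡ ∑_{0<j<p} ⌊aj/p⌋ / j`. Writing `⌊aj/p⌋` as the number of `0 < k < a` with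
`⌊kp/a⌋ < j` and exchanging the sums turns it into `a q_p(a) ≡ -∑_{0<k<a} H_{⌊kp/a⌋}`, because
`H_{p-1} ≡ 0`. For `a = 2, 3, 6`, the symmetry `H_{p-1-m} ≡ H_m` and `q_p(6) ≡ q_p(2) + q_p(3)`
leave `2 H_{⌊p/6⌋} ≡ -(4 q_p(2) + 3 q_p(3))`.
-/

open Finset

theorem harmonicMod_eq_sum_Ioc (p n : ℕ) :
    harmonicMod p n = ∑ j ∈ Ioc 0 n, (j : ZMod p)⁻¹ := by
  rw [harmonicMod, ← Icc_succ_left_eq_Ioc]; rfl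

@[simp]
theorem harmonicMod_zero (p : ℕ) : harmonicMod p 0 = 0 := by
  simp [harmonicMod_eq_sum_Ioc]

theorem harmonicMod_add_sum_Ioc (p : ℕ) {m n : ℕ} (h : m ≤ n) :
    harmonicMod p m + ∑ j ∈ Ioc m n, (j : ZMod p)⁻¹ = harmonicMod p n := by
  simp only [harmonicMod_eq_sum_Ioc, sum_Ioc_consecutive _ (Nat.zero_le m) h]

theorem Nat.Prime.not_dvd_mul_of_mem_Ioo {p a j : ℕ} (hp : p.Prime) (ha : ¬p ∣ a)
    (hj : j ∈ Ioo 0 p) : ¬p ∣ a * j := by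
  rw [mem_Ioo] at hj
  exact hp.dvd_mul.not.mpr (not_or.mpr ⟨ha, Nat.not_dvd_of_pos_of_lt hj.1 hj.2⟩)

section HarmonicMod

variable {p : ℕ} [Fact p.Prime]

theorem sum_Ioc_inv_eq_neg_harmonicMod_sub (m : ℕ) :
    ∑ j ∈ Ioc m (p - 1), (j : ZMod p)⁻¹ = -harmonicMod p (p - 1 - m) := by
  have hp := (Fact.out : p.Prime).pos
  rw [harmonicMod, ← sum_neg_distrib]
  refine sum_nbij' (p - ·) (p - ·) ?_ ?_ ?_ ?_ ?_ <;> intro j hj <;>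
    simp only [mem_Ioc, mem_Icc] at hj ⊢
  · omega
  · omega
  · omega
  · omega
  · rw [Nat.cast_sub (by omega), ZMod.natCast_self, zero_sub, inv_neg, neg_neg]

variable (hp2 : p ≠ 2)
include hp2

theorem harmonicMod_sub_one_eq_zero : harmonicMod p (p - 1) = 0 := by
  have h := harmonicMod_add_sum_Ioc p (Nat.zero_le (p - 1))
  rw [sum_Ioc_inv_eq_neg_harmonicMod_sub, Nat.sub_zero, harmonicMod_zero, zero_add] at h
  exact (Ring.eq_self_iff_eq_zero_of_char_ne_two (by rwa [ZMod.ringChar_zmod_n])).mp h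

theorem sum_Ioc_inv_eq_neg_harmonicMod {m : ℕ} (hm : m ≤ p - 1) :
    ∑ j ∈ Ioc m (p - 1), (j : ZMod p)⁻¹ = -harmonicMod p m := by
  linear_combination harmonicMod_add_sum_Ioc p hm + harmonicMod_sub_one_eq_zero hp2

theorem harmonicMod_eq_of_add_eq_sub_one {m n : ℕ} (h : m + n = p - 1) :
    harmonicMod p n = harmonicMod p m := by
  obtain rfl : n = p - 1 - m := by omega
  simpa [sum_Ioc_inv_eq_neg_harmonicMod_sub] using
    sum_Ioc_inv_eq_neg_harmonicMod hp2 (m := m) (by omega)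

end HarmonicMod

section FermatQuotient

variable {p : ℕ} [Fact p.Prime]

theorem one_add_mul_fermatQuotient {b : ℤ} (hb : ¬(p : ℤ) ∣ b) :
    1 + p * fermatQuotient p b = b ^ (p - 1) := by
  have hdvd : (p : ℤ) ∣ b ^ (p - 1) - 1 := by
    rw [← ZMod.intCast_zmod_eq_zero_iff_dvd, Int.cast_sub, Int.cast_pow, Int.cast_one,
      ZMod.pow_card_sub_one_eq_one (by rwa [Ne, ZMod.intCast_zmod_eq_zero_iff_dvd]), sub_self]
  rw [fermatQuotient, Int.mul_ediv_cancel' hdvd, add_sub_cancel]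

theorem fermatQuotient_mul {x y : ℤ} (hx : ¬(p : ℤ) ∣ x) (hy : ¬(p : ℤ) ∣ y) :
    fermatQuotient p (x * y) =
      fermatQuotient p x + fermatQuotient p y + p * (fermatQuotient p x * fermatQuotient p y) := by
  have hp : (p : ℤ) ≠ 0 := by exact_mod_cast (Fact.out : p.Prime).ne_zero
  have hxy : ¬(p : ℤ) ∣ x * y := (Int.Prime.dvd_mul' Fact.out).mt (not_or.mpr ⟨hx, hy⟩)
  apply mul_left_cancel₀ hp
  linear_combination one_add_mul_fermatQuotient hxy - (1 + p * fermatQuotient p y) *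
    one_add_mul_fermatQuotient hx - x ^ (p - 1) * one_add_mul_fermatQuotient hy - mul_pow x y (p - 1)

theorem intCast_fermatQuotient_mul {x y : ℤ} (hx : ¬(p : ℤ) ∣ x) (hy : ¬(p : ℤ) ∣ y) :
    (fermatQuotient p (x * y) : ZMod p) = fermatQuotient p x + fermatQuotient p y := by
  rw [fermatQuotient_mul hx hy]
  push_cast
  rw [ZMod.natCast_self]
  ring

theorem intCast_fermatQuotient_add_mul {r : ℤ} (hr : ¬(p : ℤ) ∣ r) (t : ℤ) :
    (fermatQuotient p (r + p * t) : ZMod p) = fermatQuotient p r - t * (r : ZMod p)⁻¹ := by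
  have hp := (Fact.out : p.Prime)
  have hrt : ¬(p : ℤ) ∣ r + p * t := by rwa [dvd_add_left (dvd_mul_right _ _)]
  -- `(r + pt)^(p-1) ≡ r^(p-1) + (p-1) r^(p-2) pt (mod p²)`
  have hsq : (p : ℤ) * p ∣ p * (fermatQuotient p (r + p * t) - fermatQuotient p r -
      r ^ (p - 1 - 1) * t * (p - 1 : ℕ)) := by
    have h := (pow_dvd_pow_of_dvd (dvd_mul_right (p : ℤ) t) 2).trans
      (sq_dvd_add_pow_sub_sub ((p : ℤ) * t) r (p - 1))
    rw [← one_add_mul_fermatQuotient hrt, ← one_add_mul_fermatQuotient hr, sq] at h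
    exact h.trans (dvd_of_eq (by ring))
  have hz := (ZMod.intCast_zmod_eq_zero_iff_dvd _ p).mpr
    ((mul_dvd_mul_iff_left (by exact_mod_cast hp.ne_zero)).mp hsq)
  push_cast [Nat.cast_sub hp.one_le, ZMod.natCast_self] at hz
  have hinv : (r : ZMod p) ^ (p - 1 - 1) = (r : ZMod p)⁻¹ := by
    refine eq_inv_of_mul_eq_one_left ?_
    rw [pow_sub_one_mul (by have := hp.two_le; omega), ZMod.pow_card_sub_one_eq_one]
    rwa [Ne, ZMod.intCast_zmod_eq_zero_iff_dvd]
  linear_combination hz - t * hinv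

end FermatQuotient

section Lerch

variable {p a : ℕ} [hp : Fact p.Prime]

theorem sum_Ioo_mul_mod_eq_sum {M : Type*} [AddCommMonoid M] (ha : ¬p ∣ a) (f : ℕ → M) :
    ∑ j ∈ Ioo 0 p, f (a * j % p) = ∑ j ∈ Ioo 0 p, f j := by
  have hmaps : Set.MapsTo (a * · % p) (Ioo 0 p) (Ioo 0 p) := fun j hj => by
    rw [mem_coe, mem_Ioo]
    refine ⟨Nat.pos_of_ne_zero fun h => ?_, Nat.mod_lt _ hp.out.pos⟩
    exact hp.out.not_dvd_mul_of_mem_Ioo ha hj (Nat.dvd_of_mod_eq_zero h)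
  have hinj : Set.InjOn (a * · % p) (Ioo 0 p) := by
    intro i hi j hj hij
    rw [mem_coe, mem_Ioo] at hi hj
    have h := congrArg (Nat.cast : ℕ → ZMod p) hij
    simp only [ZMod.natCast_mod, Nat.cast_mul] at h
    have h' := mul_left_cancel₀ (by rwa [Ne, ZMod.natCast_eq_zero_iff]) h
    rwa [ZMod.natCast_eq_natCast_iff', Nat.mod_eq_of_lt hi.2, Nat.mod_eq_of_lt hj.2] at h'
  exact sum_nbij _ hmaps hinj (surjOn_of_injOn_of_card_le _ hmaps hinj le_rfl) fun _ _ => rfl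

/-- Lerch's formula. -/
theorem natCast_mul_fermatQuotient_eq_sum (ha : ¬p ∣ a) :
    (a : ZMod p) * fermatQuotient p a =
      ∑ j ∈ Ioo 0 p, ((a * j / p : ℕ) : ZMod p) * (j : ZMod p)⁻¹ := by
  set Q : ℕ → ZMod p := fun n => (fermatQuotient p n : ZMod p)
  have hcast : ∀ {n}, ¬p ∣ n → ¬(p : ℤ) ∣ (n : ℤ) := Int.natCast_dvd_natCast.not.mpr
  have hstep : ∀ j ∈ Ioo 0 p,
      Q a + Q j = Q (a * j % p) - ((a * j / p : ℕ) : ZMod p) * ((a : ZMod p) * j)⁻¹ := by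
    intro j hj
    have hj' : ¬p ∣ j := Nat.not_dvd_of_pos_of_lt (mem_Ioo.mp hj).1 (mem_Ioo.mp hj).2
    have hr : ¬p ∣ a * j % p := by
      rw [Nat.dvd_mod_iff dvd_rfl]
      exact hp.out.not_dvd_mul_of_mem_Ioo ha hj
    have hdecomp : ((a * j : ℕ) : ℤ) = ((a * j % p : ℕ) : ℤ) + p * ((a * j / p : ℕ) : ℤ) := by
      exact_mod_cast (Nat.mod_add_div (a * j) p).symm
    simp only [Q]
    rw [← intCast_fermatQuotient_mul (hcast ha) (hcast hj'), ← Nat.cast_mul, hdecomp,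
      intCast_fermatQuotient_add_mul (hcast hr)]
    simp only [Int.cast_natCast, ZMod.natCast_mod, Nat.cast_mul]
  -- `j ↦ aj mod p` permutes `Ioo 0 p`, so the terms `Q j` cancel and `(p - 1) Q a = -Q a` is left.
  have hsum := sum_congr rfl hstep
  rw [sum_add_distrib, sum_sub_distrib, sum_const, Nat.card_Ioo, sum_Ioo_mul_mod_eq_sum ha Q,
    nsmul_eq_mul, Nat.cast_sub (by simpa using hp.out.one_le), ZMod.natCast_self] at hsum
  have ha0 : (a : ZMod p) ≠ 0 := by rwa [Ne, ZMod.natCast_eq_zero_iff]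
  have hQa : Q a = ∑ j ∈ Ioo 0 p, ((a * j / p : ℕ) : ZMod p) * ((a : ZMod p) * j)⁻¹ := by
    linear_combination -hsum
  change (a : ZMod p) * Q a = _
  rw [hQa, mul_sum]
  refine sum_congr rfl fun j _ => ?_
  field_simp

end Lerch

theorem card_filter_div_lt_eq_mul_div {p a j : ℕ} (hj : j < p) (hpaj : ¬p ∣ a * j) :
    #{k ∈ Ioo 0 a | k * p / a < j} = a * j / p := by
  have ha : 0 < a := Nat.pos_of_ne_zero fun h => hpaj (by simp [h])
  have hp : 0 < p := by omega
  suffices h : {k ∈ Ioo 0 a | k * p / a < j} = Icc 1 (a * j / p) by simp [h]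
  ext k
  simp only [mem_filter, mem_Ioo, mem_Icc, Nat.div_lt_iff_lt_mul ha, Nat.le_div_iff_mul_le hp]
  have hne : k * p ≠ a * j := fun h => hpaj ⟨k, by rw [← h, mul_comm]⟩
  have : a * j < a * p := Nat.mul_lt_mul_of_pos_left hj ha
  constructor
  · rintro ⟨⟨hk, -⟩, hlt⟩
    exact ⟨hk, by rw [mul_comm j] at hlt; omega⟩
  · rintro ⟨hk, hle⟩
    refine ⟨⟨hk, ?_⟩, by rw [mul_comm j]; omega⟩
    exact Nat.lt_of_mul_lt_mul_right (a := p) (by omega)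

section HarmonicSum

variable {p a : ℕ} [hp : Fact p.Prime] (hp2 : p ≠ 2) (ha : ¬p ∣ a)
include hp2 ha

theorem sum_mul_div_mul_inv_eq_neg_sum_harmonicMod :
    ∑ j ∈ Ioo 0 p, ((a * j / p : ℕ) : ZMod p) * (j : ZMod p)⁻¹ =
      -∑ k ∈ Ioo 0 a, harmonicMod p (k * p / a) := by
  calc ∑ j ∈ Ioo 0 p, ((a * j / p : ℕ) : ZMod p) * (j : ZMod p)⁻¹
      = ∑ j ∈ Ioo 0 p, ∑ k ∈ Ioo 0 a with k * p / a < j, (j : ZMod p)⁻¹ := by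
        refine sum_congr rfl fun j hj => ?_
        rw [sum_const, nsmul_eq_mul, card_filter_div_lt_eq_mul_div (mem_Ioo.mp hj).2
          (hp.out.not_dvd_mul_of_mem_Ioo ha hj)]
    _ = ∑ k ∈ Ioo 0 a, ∑ j ∈ Ioc (k * p / a) (p - 1), (j : ZMod p)⁻¹ := by
        refine sum_comm' fun j k => ?_
        simp only [mem_Ioo, mem_filter, mem_Ioc]
        have := (k * p / a).zero_le
        omega
    _ = -∑ k ∈ Ioo 0 a, harmonicMod p (k * p / a) := by
        rw [← sum_neg_distrib]
        refine sum_congr rfl fun k hk => sum_Ioc_inv_eq_neg_harmonicMod hp2 ?_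
        rw [mem_Ioo] at hk
        have : k * p < a * p := Nat.mul_lt_mul_of_pos_right hk.2 hp.out.pos
        have : k * p / a < p := (Nat.div_lt_iff_lt_mul (hk.1.trans hk.2)).mpr (by linarith)
        omega

theorem natCast_mul_fermatQuotient_eq_neg_sum_harmonicMod :
    (a : ZMod p) * fermatQuotient p a = -∑ k ∈ Ioo 0 a, harmonicMod p (k * p / a) :=
  (natCast_mul_fermatQuotient_eq_sum ha).trans (sum_mul_div_mul_inv_eq_neg_sum_harmonicMod hp2 ha)

end HarmonicSum

theorem harmonic_zero_iff_fermat_quotient (p : ℕ) (hp : p.Prime) (h5 : 5 < p) :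
    harmonicMod p (p / 6) = 0 ↔
      4 * fermatQuotient p 2 + 3 * fermatQuotient p 3 ≡ 0 [ZMOD p] := by
  have := Fact.mk hp
  have hp2 : p ≠ 2 := by omega
  have hp6 : p % 6 = 1 ∨ p % 6 = 5 := by
    have h2 := hp.eq_one_or_self_of_dvd 2
    have h3 := hp.eq_one_or_self_of_dvd 3
    simp only [Nat.dvd_iff_mod_eq_zero] at h2 h3
    omega
  have h2 : ¬p ∣ 2 := Nat.not_dvd_of_pos_of_lt two_pos (by omega)
  have h3 : ¬p ∣ 3 := Nat.not_dvd_of_pos_of_lt three_pos (by omega)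
  have E2 := natCast_mul_fermatQuotient_eq_neg_sum_harmonicMod hp2 h2
  have E3 := natCast_mul_fermatQuotient_eq_neg_sum_harmonicMod hp2 h3
  have E6 := natCast_mul_fermatQuotient_eq_neg_sum_harmonicMod (a := 6) hp2
    (Nat.not_dvd_of_pos_of_lt (by norm_num) (by omega))
  norm_num [show Ioo 0 2 = {1} from rfl, show Ioo 0 3 = {1, 2} from rfl,
    show Ioo 0 6 = {1, 2, 3, 4, 5} from rfl] at E2 E3 E6
  rw [harmonicMod_eq_of_add_eq_sub_one hp2 (show p / 3 + 2 * p / 3 = p - 1 by omega)] at E3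
  rw [harmonicMod_eq_of_add_eq_sub_one hp2 (show p / 6 + 5 * p / 6 = p - 1 by omega),
    harmonicMod_eq_of_add_eq_sub_one hp2 (show p / 3 + 4 * p / 6 = p - 1 by omega),
    show 3 * p / 6 = p / 2 by omega, show 2 * p / 6 = p / 3 by omega] at E6
  have hQ6 := intCast_fermatQuotient_mul (p := p) (x := 2) (y := 3)
    (by exact_mod_cast h2) (by exact_mod_cast h3)
  norm_num at hQ6
  have key : ((4 * fermatQuotient p 2 + 3 * fermatQuotient p 3 : ℤ) : ZMod p) =
      -(2 * harmonicMod p (p / 6)) := by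
    push_cast
    linear_combination E6 - E2 - E3 - 6 * hQ6
  rw [← ZMod.intCast_eq_intCast_iff, Int.cast_zero, key, neg_eq_zero, mul_eq_zero,
    or_iff_right (Ring.two_ne_zero (by rwa [ZMod.ringChar_zmod_n]))]
end
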